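/- Let M be a matroid on a finite ground set U, let N ⊆ U, let b > 0 and c > 0 be reals, and let x : U → [0,1] satisfy Σ_{e∈N} x(e) ≤ b · rank(N). Let μ be a probability measure on the powerset of U such that μ{ R ⊆ U : e ∈ R } = x(e) for every e ∈ N. Let r ≥ 1 and let e₁, e₂, …, e_r be distinct elements of N such that {e₁, …, e_r} is independent in M and such that for every i ∈ {1, …, r}, μ{ R ⊆ U : e_i ∈ span(((R ∩ N) ∪ {e₁, …, e_{i−1}}) \ {e_i}) } > c. Then c · r < b · rank(N). -/

import Mathlib

open Classical

/-- A matroid on a finite ground set `α`, given by its independent sets. -/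
structure FinMatroid (α : Type*) [DecidableEq α] [Fintype α] where
  /-- The independent sets. -/
  Indep : Finset α → Prop
  indep_empty : Indep ∅
  indep_subset : ∀ ⦃I J : Finset α⦄, Indep J → I ⊆ J → Indep I
  indep_exchange : ∀ ⦃I J : Finset α⦄, Indep I → Indep J → I.card < J.card →
    ∃ e ∈ J, e ∉ I ∧ Indep (insert e I)

namespace FinMatroid

variable {α : Type*} [DecidableEq α] [Fintype α]

/-- A basis of the matroid: a maximal independent set. -/
def Base (M : FinMatroid α) (B : Finset α) : Prop :=
  M.Indep B ∧ ∀ e : α, e ∉ B → ¬ M.Indep (insert e B)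

/-- The rank of a set: the size of a largest independent subset. -/
noncomputable def rank (M : FinMatroid α) (S : Finset α) : ℕ :=
  (S.powerset.filter M.Indep).sup Finset.card

/-- The span of a set: the elements whose insertion does not increase the rank. -/
noncomputable def span (M : FinMatroid α) (S : Finset α) : Finset α :=
  Finset.univ.filter fun e => M.rank (insert e S) = M.rank S

end FinMatroid

/-!
For a fixed outcome R put S = R ∩ N and follow the rank of S ∪ {e₁, …, e_k} as k runs
from 0 to r: it starts at most |S|, ends at least r because the eᵢ are independent, grows by at
most one per step, and does not grow at the steps i where eᵢ is spanned by R. So at most |S| of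
the r events occur for R. Averaging over μ, the expected number of events, which exceeds c·r, is at
most the expected size of R ∩ N, that is Σ_{e∈N} x(e) ≤ b·rank(N).
-/

open Finset

lemma add_card_filter_le_of_step_le_one {r : ℕ} (g : ℕ → ℤ) (p : Fin r → Prop) [DecidablePred p]
    (hstep : ∀ i : Fin r, g (i + 1) ≤ g i + 1) (hflat : ∀ i : Fin r, p i → g (i + 1) ≤ g i) :
    g r + #{i | p i} ≤ g 0 + r := by
  have htelescope : ∑ i : Fin r, (g (i + 1) - g i) = g r - g 0 := by
    rw [Fin.sum_univ_eq_sum_range (fun i => g (i + 1) - g i), sum_range_sub]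
  have hbound : ∑ i : Fin r, (g (i + 1) - g i) ≤ ∑ i : Fin r, (1 - if p i then 1 else 0) := by
    refine sum_le_sum fun i _ => ?_
    split_ifs with hi
    · linarith [hflat i hi]
    · linarith [hstep i]
  rw [htelescope, sum_sub_distrib, sum_boole] at hbound
  simp only [sum_const, card_univ, Fintype.card_fin, nsmul_eq_mul, mul_one] at hbound
  linarith

lemma Finset.sum_sum_ite_eq_sum_card_filter_nsmul {ι κ β : Type*} [AddCommMonoid β]
    (s : Finset ι) (t : Finset κ) (p : ι → κ → Prop) [∀ i k, Decidable (p i k)] (f : κ → β) :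
    ∑ i ∈ s, ∑ k ∈ t, (if p i k then f k else 0) = ∑ k ∈ t, #{i ∈ s | p i k} • f k := by
  rw [sum_comm]
  exact sum_congr rfl fun k _ => by rw [← sum_filter, sum_const]

namespace FinMatroid

variable {α : Type*} [DecidableEq α] [Fintype α] (M : FinMatroid α)

lemma rank_mono {S T : Finset α} (h : S ⊆ T) : M.rank S ≤ M.rank T :=
  sup_mono (filter_subset_filter _ (powerset_mono.2 h))

lemma card_le_rank_of_indep {I S : Finset α} (hI : M.Indep I) (hIS : I ⊆ S) :
    I.card ≤ M.rank S :=
  le_sup (mem_filter.2 ⟨mem_powerset.2 hIS, hI⟩)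

lemma rank_le_card (S : Finset α) : M.rank S ≤ S.card :=
  Finset.sup_le fun _ hI => card_le_card (mem_powerset.1 (mem_filter.1 hI).1)

lemma rank_insert_le (a : α) (S : Finset α) : M.rank (insert a S) ≤ M.rank S + 1 := by
  refine Finset.sup_le fun I hI => ?_
  obtain ⟨hIS, hIndep⟩ := mem_filter.1 hI
  have hrank : (I.erase a).card ≤ M.rank S :=
    M.card_le_rank_of_indep (M.indep_subset hIndep (erase_subset a I))
      (subset_insert_iff.1 (mem_powerset.1 hIS))
  have := pred_card_le_card_erase (s := I) (a := a)
  omega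

lemma rank_insert_le_of_mem_span_erase {a : α} {S : Finset α} (h : a ∈ M.span (S.erase a)) :
    M.rank (insert a S) ≤ M.rank S := by
  have hspan : M.rank (insert a (S.erase a)) = M.rank (S.erase a) := (mem_filter.1 h).2
  have hinsert : insert a (S.erase a) = insert a S := by
    by_cases ha : a ∈ S <;> simp [ha]
  rw [hinsert] at hspan
  exact hspan ▸ M.rank_mono (erase_subset a S)

lemma card_filter_mem_span_le (S : Finset α) {r : ℕ} {e : Fin r → α}
    (he : Function.Injective e) (hind : M.Indep (univ.image e)) :
    #{i | e i ∈ M.span ((S ∪ (univ.filter fun j => j < i).image e).erase (e i))} ≤ S.card := by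
  let E : ℕ → Finset α := fun k => (univ.filter fun j : Fin r => (j : ℕ) < k).image e
  have hE_succ (i : Fin r) : E (i + 1) = insert (e i) (E i) := by
    ext a
    simp [E, le_iff_eq_or_lt, or_and_right, exists_or, Fin.val_inj, eq_comm]
  have hcount := add_card_filter_le_of_step_le_one (fun k => (M.rank (S ∪ E k) : ℤ))
    (fun i => e i ∈ M.span ((S ∪ E i).erase (e i)))
    (fun i => by rw [hE_succ i, union_insert]; exact_mod_cast M.rank_insert_le (e i) (S ∪ E i))
    (fun i hi => by rw [hE_succ i, union_insert]; exact_mod_cast M.rank_insert_le_of_mem_span_erase hi)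
  have hEr : r ≤ M.rank (S ∪ E r) := by
    have : E r = univ.image e := by simp [E]
    simpa [this, card_image_of_injective _ he] using
      M.card_le_rank_of_indep hind (subset_union_right (s₁ := S))
  have hE0 : M.rank (S ∪ E 0) ≤ S.card := by simpa [E] using M.rank_le_card S
  show #{i : Fin r | e i ∈ M.span ((S ∪ E i).erase (e i))} ≤ S.card
  omega

end FinMatroid

theorem stmt_7_general {α : Type*} [DecidableEq α] [Fintype α] (M : FinMatroid α)
    (N : Finset α) (b c : ℝ)
    (x : α → ℝ)
    (hxN : ∑ e ∈ N, x e ≤ b * (M.rank N : ℝ))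
    (μ : Finset α → ℝ) (hμ0 : ∀ R : Finset α, 0 ≤ μ R)
    (hmarg : ∀ e ∈ N, (∑ R : Finset α, if e ∈ R then μ R else 0) = x e)
    (r : ℕ) (hr : 1 ≤ r) (e : Fin r → α) (hinj : Function.Injective e)
    (hind : M.Indep (Finset.univ.image e))
    (hcond : ∀ i : Fin r,
      c < ∑ R : Finset α,
        if e i ∈ M.span (((R ∩ N) ∪ ((Finset.univ.filter (fun j : Fin r => j < i)).image e)).erase (e i))
        then μ R else 0) :
    c * (r : ℝ) < b * (M.rank N : ℝ) := by
  have hpos : (univ : Finset (Fin r)).Nonempty := ⟨⟨0, hr⟩, mem_univ _⟩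
  calc c * (r : ℝ) = ∑ _i : Fin r, c := by simp [mul_comm]
    _ < ∑ i : Fin r, ∑ R : Finset α, if e i ∈ M.span (((R ∩ N) ∪
          (univ.filter fun j => j < i).image e).erase (e i)) then μ R else 0 :=
      sum_lt_sum_of_nonempty hpos fun i _ => hcond i
    _ = ∑ R : Finset α, #{i | e i ∈ M.span (((R ∩ N) ∪
          (univ.filter fun j => j < i).image e).erase (e i))} • μ R :=
      sum_sum_ite_eq_sum_card_filter_nsmul _ _ _ _
    _ ≤ ∑ R : Finset α, #{a ∈ N | a ∈ R} • μ R := by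
      refine sum_le_sum fun R _ => nsmul_le_nsmul_left (hμ0 R) ?_
      simpa [filter_mem_eq_inter, inter_comm] using M.card_filter_mem_span_le (R ∩ N) hinj hind
    _ = ∑ a ∈ N, x a := by
      rw [← sum_sum_ite_eq_sum_card_filter_nsmul]
      exact sum_congr rfl hmarg
    _ ≤ b * (M.rank N : ℝ) := hxN

/-- Counting argument in the proof of Lemma FSZ16 2.1.1: if `e₁, …, e_r` are distinct
elements of `N` forming an independent set, each spanned by `(R ∩ N) ∪ {e₁, …, e_{i-1}}`
with probability more than `c`, then `c · r < b · rank N`. -/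
theorem stmt_7 {α : Type*} [DecidableEq α] [Fintype α] (M : FinMatroid α)
    (N : Finset α) (b c : ℝ) (hb : 0 < b) (hc : 0 < c)
    (x : α → ℝ) (hx0 : ∀ e : α, 0 ≤ x e) (hx1 : ∀ e : α, x e ≤ 1)
    (hxN : ∑ e ∈ N, x e ≤ b * (M.rank N : ℝ))
    (μ : Finset α → ℝ) (hμ0 : ∀ R : Finset α, 0 ≤ μ R) (hμ1 : ∑ R : Finset α, μ R = 1)
    (hmarg : ∀ e ∈ N, (∑ R : Finset α, if e ∈ R then μ R else 0) = x e)
    (r : ℕ) (hr : 1 ≤ r) (e : Fin r → α) (hinj : Function.Injective e)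
    (heN : ∀ i : Fin r, e i ∈ N)
    (hind : M.Indep (Finset.univ.image e))
    (hcond : ∀ i : Fin r,
      c < ∑ R : Finset α,
        if e i ∈ M.span (((R ∩ N) ∪ ((Finset.univ.filter (fun j : Fin r => j < i)).image e)).erase (e i))
        then μ R else 0) :
    c * (r : ℝ) < b * (M.rank N : ℝ) :=
  stmt_7_general M N b c x hxN μ hμ0 hmarg r hr e hinj hind hcond
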